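/- Let G be a finite group and suppose M and M' are G-lattices with flabby resolutions 0 → M → P → F → 0 and 0 → M → P' → F' → 0 (P, P' permutation; F, F' flabby). Then F ⊕ P' ≅ F' ⊕ P as G-lattices; in particular the similarity class [F] in C(G)/S(G) is independent of the chosen flabby resolution. -/

import Mathlib

noncomputable section

namespace Paper

open Function

variable {G : Type} [Group G]

/-- The Tate cohomology `Ĥ⁻¹` of a finite group acting on a `ℤ`-module vanishes:
every element killed by the norm map lies in the augmentation submodule. -/
def Hneg1Vanish [Finite G] {M : Type} [AddCommGroup M] [Module ℤ M]
    (ρ : Representation ℤ G M) : Prop :=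
  ∀ m : M, (∑ᶠ g : G, ρ g m) = 0 →
    m ∈ Submodule.span ℤ {x : M | ∃ (g : G) (y : M), x = ρ g y - y}

/-- The Tate cohomology `Ĥ⁰` vanishes: every invariant element is a norm. -/
def Hhat0Vanish [Finite G] {M : Type} [AddCommGroup M] [Module ℤ M]
    (ρ : Representation ℤ G M) : Prop :=
  ∀ m : M, (∀ g : G, ρ g m = m) → ∃ y : M, m = ∑ᶠ g : G, ρ g y

/-- `H¹` vanishes: every inhomogeneous 1-cocycle is a 1-coboundary. -/
def H1Vanish {M : Type} [AddCommGroup M] [Module ℤ M]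
    (ρ : Representation ℤ G M) : Prop :=
  ∀ f : G → M, (∀ g h : G, f (g * h) = ρ g (f h) + f g) →
    ∃ m : M, ∀ g : G, f g = ρ g m - m

/-- A `G`-lattice: a finitely generated `ℤ`-free module with a `G`-action. -/
structure GLat (G : Type) [Group G] : Type 1 where
  carrier : Type
  [ab : AddCommGroup carrier]
  [mod : Module ℤ carrier]
  [free : Module.Free ℤ carrier]
  [fin : Module.Finite ℤ carrier]
  ρ : Representation ℤ G carrier

attribute [instance] GLat.ab GLat.mod GLat.free GLat.fin

attribute [local instance 2000] Prod.instModule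

instance : CoeSort (GLat G) Type := ⟨GLat.carrier⟩

/-- Build a `G`-lattice from a representation on a finite free `ℤ`-module. -/
def ofRep (M : Type) [AddCommGroup M] [Module ℤ M] [Module.Free ℤ M] [Module.Finite ℤ M]
    (ρ : Representation ℤ G M) : GLat G :=
  { carrier := M, ρ := ρ }

namespace GLat

/-- Direct sum of two `G`-lattices. -/
def sum (M N : GLat G) : GLat G where
  carrier := M.carrier × N.carrier
  ab := Prod.instAddCommGroup
  mod := Prod.instModule
  free := Module.Free.prod ℤ M.carrier N.carrier
  fin := Module.Finite.prod
  ρ :=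
    { toFun := fun g => (M.ρ g).prodMap (N.ρ g)
      map_one' := by
        letI : Module ℤ (M.carrier × N.carrier) := Prod.instModule
        refine LinearMap.ext fun x => ?_
        simp
      map_mul' := fun g h => by
        letI : Module ℤ (M.carrier × N.carrier) := Prod.instModule
        refine LinearMap.ext fun x => ?_
        simp }

/-- Equivariant isomorphism of `G`-lattices. -/
def Iso (M N : GLat G) : Prop :=
  ∃ e : M.carrier ≃ₗ[ℤ] N.carrier, ∀ (g : G) (m : M.carrier), e (M.ρ g m) = N.ρ g (e m)

/-- A `ℤ`-linear map of `G`-lattices is equivariant. -/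
def IsEquivariant (M N : GLat G) (f : M.carrier →ₗ[ℤ] N.carrier) : Prop :=
  ∀ (g : G) (m : M.carrier), f (M.ρ g m) = N.ρ g (f m)

/-- A permutation `G`-lattice: it has a `ℤ`-basis permuted by `G`. -/
def IsPermutation (M : GLat G) : Prop :=
  ∃ (ι : Type) (_ : Fintype ι) (b : Module.Basis ι ℤ M.carrier) (σ : G →* Equiv.Perm ι),
    ∀ (g : G) (i : ι), M.ρ g (b i) = b (σ g i)

/-- A stably permutation `G`-lattice. -/
def IsStablyPermutation (M : GLat G) : Prop :=
  ∃ P Q : GLat G, P.IsPermutation ∧ Q.IsPermutation ∧ (M.sum P).Iso Q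

/-- An invertible `G`-lattice: a direct summand of a permutation lattice. -/
def IsInvertible (M : GLat G) : Prop :=
  ∃ N Q : GLat G, Q.IsPermutation ∧ (M.sum N).Iso Q

/-- Flabby: `Ĥ⁻¹(H, M) = 0` for every subgroup `H ≤ G`. -/
def IsFlabby [Finite G] (M : GLat G) : Prop :=
  ∀ H : Subgroup G, Hneg1Vanish (MonoidHom.comp M.ρ H.subtype)

/-- Coflabby: `H¹(H, M) = 0` for every subgroup `H ≤ G`. -/
def IsCoflabby (M : GLat G) : Prop :=
  ∀ H : Subgroup G, H1Vanish (MonoidHom.comp M.ρ H.subtype)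

/-- Restriction of a `G`-lattice to a subgroup `H`. -/
def res (H : Subgroup G) (M : GLat G) : GLat H :=
  { carrier := M.carrier, ρ := MonoidHom.comp M.ρ H.subtype }

end GLat

/-- A flabby resolution `0 → M → P → F → 0` of a `G`-lattice `M`:
`P` is permutation and `F` is flabby. -/
structure FlabbyResolution [Finite G] (M : GLat G) : Type 1 where
  P : GLat G
  F : GLat G
  incl : M.carrier →ₗ[ℤ] P.carrier
  proj : P.carrier →ₗ[ℤ] F.carrier
  equiv_incl : GLat.IsEquivariant M P incl
  equiv_proj : GLat.IsEquivariant P F proj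
  inj : Function.Injective incl
  surj : Function.Surjective proj
  exact : LinearMap.range incl = LinearMap.ker proj
  permP : P.IsPermutation
  flabbyF : F.IsFlabby

/-- The flabby class `[M]^{fl}` is zero: the flabby part of a flabby resolution
is stably permutation. -/
def FlabbyClassZero [Finite G] (M : GLat G) : Prop :=
  ∃ R : FlabbyResolution M, R.F.IsStablyPermutation

/-- The flabby class `[M]^{fl}` is invertible. -/
def FlabbyClassInvertible [Finite G] (M : GLat G) : Prop :=
  ∃ R : FlabbyResolution M, R.F.IsInvertible

/-- The permutation `G`-lattice `ℤ[S]` on a finite `G`-set `S`. -/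
def ofMulActionGLat (G : Type) [Group G] (S : Type) [MulAction G S] [Finite S] : GLat G :=
  letI : Fintype S := Fintype.ofFinite S
  { carrier := S →₀ ℤ
    fin := Module.Finite.equiv (Finsupp.linearEquivFunOnFinite ℤ ℤ S).symm
    ρ := (((MonoidAlgebra.coeffLinearEquiv ℤ).conjAlgEquiv ℤ).toMonoidHom).comp
      (Representation.ofMulAction ℤ G S) }

/-- The trivial rank-one `G`-lattice `ℤ`. -/
def trivialGLat (G : Type) [Group G] : GLat G :=
  { carrier := ℤ, ρ := (1 : Representation ℤ G ℤ) }


/-!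
Let `X` be the pushout of `P ← M → P'`. It sits in exact sequences `0 → P' → X → F → 0` and
`0 → P → X → F' → 0`, and both split `G`-equivariantly, so `F ⊕ P' ≅ X ≅ F' ⊕ P`.

An exact sequence `0 → Q → X → F → 0` with `Q` permutation and `F` flabby splits: the coboundary
of a `ℤ`-linear section is a cocycle in `Hom(F, Q)`, and `H¹(G, Hom(F, Q)) = 0`. Indeed, writing
`Q = ⊕ ℤ[G/H]`, Shapiro's lemma reduces this to `H¹(H, F*) = 0`, which is dual to
`Ĥ⁻¹(H, F) = 0`. Concretely, `|H| • d` is the coboundary of the integral functional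
`φ = -∑ d h`, and `φ` is divisible by `|H|` on the augmentation submodule `I`. Since
`Ĥ⁻¹(H, F) = 0` makes `F/I` torsion free, `I` is a direct summand; composing `φ` with the
projection along `I` gives an invariant functional, and subtracting it leaves a functional that is
divisible by `|H|` everywhere and has the same coboundary.
-/

open Representation

theorem _root_.LinearMap.exists_mul_of_forall_dvd {M : Type} [AddCommGroup M] [Module ℤ M]
    (f : M →ₗ[ℤ] ℤ) (n : ℤ) (h : ∀ x, n ∣ f x) : ∃ f' : M →ₗ[ℤ] ℤ, ∀ x, f x = n * f' x :=
  ⟨{ toFun := fun x => f x / n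
     map_add' := fun x y => by rw [map_add, Int.add_ediv_of_dvd_left (h x)]
     map_smul' := fun c x => by simp [Int.mul_ediv_assoc c (h x)] },
    fun x => (Int.mul_ediv_cancel' (h x)).symm⟩

section Dual

variable {H V F : Type} [Group H] [AddCommGroup V] [AddCommGroup F]

theorem card_nsmul_cocycle_eq [Fintype H] {ρ : Representation ℤ H V} {d : H → V}
    (hd : ∀ g h, d (g * h) = ρ g (d h) + d g) (g : H) :
    Fintype.card H • d g = ρ g (-∑ h, d h) - -∑ h, d h := by
  have hsum : ∑ h, d (g * h) = ∑ h, d h :=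
    Fintype.sum_bijective _ (Group.mulLeft_bijective g) _ _ fun _ => rfl
  rw [Finset.sum_congr rfl fun h _ => hd g h, Finset.sum_add_distrib, ← map_sum,
    Finset.sum_const, Finset.card_univ] at hsum
  rw [map_neg, neg_sub_neg, eq_sub_iff_add_eq, add_comm, hsum]

theorem Hneg1Vanish.mem_ker_of_norm_eq_zero [Fintype H] {ρ : Representation ℤ H F}
    (hρ : Hneg1Vanish ρ) {x : F} (hx : ρ.norm x = 0) : x ∈ Coinvariants.ker ρ := by
  have hmem := hρ x (by simpa [finsum_eq_sum_of_fintype, Representation.norm] using hx)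
  have hgen : Set.range (fun gy : H × F => ρ gy.1 gy.2 - gy.2) = {x | ∃ g y, x = ρ g y - y} := by
    ext
    simp [eq_comm]
  rwa [Coinvariants.ker, hgen]

theorem Hneg1Vanish.isTorsionFree_quotient [Fintype H] [Module.IsTorsionFree ℤ F]
    {ρ : Representation ℤ H F} (hρ : Hneg1Vanish ρ) :
    Module.IsTorsionFree ℤ (F ⧸ Coinvariants.ker ρ) := by
  refine .of_smul_eq_zero fun c y hcy => or_iff_not_imp_left.2 fun hc => ?_
  induction y using Submodule.Quotient.induction_on with | H x => ?_
  rw [← Submodule.Quotient.mk_smul, Submodule.Quotient.mk_eq_zero] at hcy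
  have hnorm : ρ.norm (c • x) = 0 := by
    simpa using congrArg (Coinvariants.lift ρ ρ.norm ρ.norm_comp_self)
      ((Coinvariants.mk_eq_zero ρ).2 hcy)
  rw [map_zsmul, smul_eq_zero] at hnorm
  exact (Submodule.Quotient.mk_eq_zero _).2 (hρ.mem_ker_of_norm_eq_zero (hnorm.resolve_left hc))

theorem Hneg1Vanish.exists_projection_along_ker [Fintype H] [Module.IsTorsionFree ℤ F]
    [Module.Finite ℤ F] {ρ : Representation ℤ H F} (hρ : Hneg1Vanish ρ) :
    ∃ q : F →ₗ[ℤ] F, (∀ x, x - q x ∈ Coinvariants.ker ρ) ∧ ∀ g x, q (ρ g x) = q x := by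
  have := hρ.isTorsionFree_quotient
  set I := Coinvariants.ker ρ
  obtain ⟨s, hs⟩ := I.mkQ.exists_rightInverse_of_surjective I.range_mkQ
  refine ⟨s ∘ₗ I.mkQ, fun x => ?_, fun g x => congrArg s (Coinvariants.mk_self_apply ρ g x)⟩
  rw [← Submodule.Quotient.mk_eq_zero, ← Submodule.mkQ_apply, map_sub, LinearMap.comp_apply,
    ← LinearMap.comp_apply I.mkQ, hs, LinearMap.id_apply, sub_self]

theorem Hneg1Vanish.h1Vanish_dual [Finite H] [Module.IsTorsionFree ℤ F] [Module.Finite ℤ F]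
    {ρ : Representation ℤ H F} (hρ : Hneg1Vanish ρ) : H1Vanish ρ.dual := by
  have := Fintype.ofFinite H
  intro d hd
  set n : ℤ := (Fintype.card H : ℤ)
  set φ : Module.Dual ℤ F := -∑ h, d h
  have hφ : ∀ g x, n * d g x = φ (ρ g⁻¹ x) - φ x := fun g x => by
    simpa [n, φ, Module.Dual.transpose_apply] using congr($(card_nsmul_cocycle_eq hd g) x)
  have hdvd : ∀ v ∈ Coinvariants.ker ρ, n ∣ φ v := by
    suffices Coinvariants.ker ρ ≤ Submodule.comap φ (Ideal.span {n}) from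
      fun v hv => Ideal.mem_span_singleton.1 (this hv)
    refine Submodule.span_le.2 ?_
    rintro _ ⟨⟨g, y⟩, rfl⟩
    exact Ideal.mem_span_singleton.2 ⟨d g⁻¹ y, by simp [hφ g⁻¹ y]⟩
  obtain ⟨q, hq, hqinv⟩ := hρ.exists_projection_along_ker
  obtain ⟨μ, hμ⟩ := (φ ∘ₗ (LinearMap.id - q)).exists_mul_of_forall_dvd n fun x => hdvd _ (hq x)
  have hn : n ≠ 0 := by simp [n]
  refine ⟨μ, fun g => LinearMap.ext fun x => mul_left_cancel₀ hn ?_⟩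
  calc n * d g x = φ (ρ g⁻¹ x) - φ x := hφ g x
    _ = (φ ∘ₗ (LinearMap.id - q)) (ρ g⁻¹ x) - (φ ∘ₗ (LinearMap.id - q)) x := by simp [hqinv]
    _ = n * (μ (ρ g⁻¹ x) - μ x) := by rw [hμ, hμ, mul_sub]
    _ = _ := by simp [Module.Dual.transpose_apply]

end Dual

section Shapiro

variable {V ι : Type} [AddCommGroup V]

/-- For `ι = G ⧸ H` this is the module coinduced from the restriction of `ρ` to `H`. -/
def piPerm (ρ : Representation ℤ G V) (σ : G →* Equiv.Perm ι) : Representation ℤ G (ι → V) where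
  toFun g := LinearMap.pi fun i => ρ g ∘ₗ LinearMap.proj ((σ g)⁻¹ i)
  map_one' := by ext; simp
  map_mul' g h := by ext; simp

@[simp]
theorem piPerm_apply (ρ : Representation ℤ G V) (σ : G →* Equiv.Perm ι) (g : G) (m : ι → V)
    (i : ι) : piPerm ρ σ g m i = ρ g (m ((σ g)⁻¹ i)) :=
  rfl

theorem exists_orbit_representatives (σ : G →* Equiv.Perm ι) :
    ∃ (r : ι → ι) (τ : ι → G), (∀ g i, r (σ g i) = r i) ∧ ∀ i, σ (τ i) (r i) = i := by
  let _ : MulAction G ι := MulAction.compHom ι σ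
  let r : ι → ι := fun i => (Quotient.mk (MulAction.orbitRel G ι) i).out
  have hr : ∀ i, ∃ g : G, σ g (r i) = i := fun i => by
    obtain ⟨g, hg⟩ := Quotient.mk_out (s := MulAction.orbitRel G ι) i
    exact ⟨g⁻¹, by rw [map_inv]; exact Equiv.Perm.inv_eq_iff_eq.2 hg.symm⟩
  choose τ hτ using hr
  exact ⟨r, τ, fun g i => congrArg Quotient.out (Quotient.sound ⟨g, rfl⟩), hτ⟩

theorem h1Vanish_piPerm (ρ : Representation ℤ G V) (σ : G →* Equiv.Perm ι)
    (hstab : ∀ i : ι,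
      H1Vanish (ρ.comp ((MulAction.stabilizer (Equiv.Perm ι) i).comap σ).subtype)) :
    H1Vanish (piPerm ρ σ) := by
  intro c hc
  have hc' : ∀ g h i, c (g * h) i = ρ g (c h ((σ g)⁻¹ i)) + c g i := fun g h i =>
    congrFun (hc g h) i
  obtain ⟨r, τ, hr, hτ⟩ := exists_orbit_representatives σ
  have hstab' : ∀ k, ∃ φ : V, ∀ h : G, σ h k = k → c h k = ρ h φ - φ := by
    intro k
    obtain ⟨φ, hφ⟩ := hstab k (fun h => c h k) fun g h => by
      have hg : (σ g)⁻¹ k = k := Equiv.Perm.inv_eq_iff_eq.2 g.2.symm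
      simpa [hg] using hc' g h k
    exact ⟨φ, fun h hh => hφ ⟨h, hh⟩⟩
  choose φ hφ using hstab'
  refine ⟨fun i => ρ (τ i) (φ (r i)) - c (τ i) i, fun g => funext fun i => ?_⟩
  set j := (σ g)⁻¹ i
  have hrj : r j = r i := by simpa only [j, map_inv] using hr g⁻¹ i
  have hτi : (σ (τ i))⁻¹ i = r i := Equiv.Perm.inv_eq_iff_eq.2 (hτ i).symm
  -- `τ i` and `g * τ j` both carry `r i` to `i`, so they differ by a stabiliser element.
  have hmem : σ ((τ i)⁻¹ * (g * τ j)) (r i) = r i := by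
    have hgj : σ g j = i := (Equiv.Perm.inv_eq_iff_eq.1 rfl).symm
    rw [map_mul, map_mul, Equiv.Perm.mul_apply, Equiv.Perm.mul_apply, ← hrj, hτ j, hgj, map_inv,
      hτi, hrj]
  have h1 := hc' g (τ j) i
  have h2 := hc' (τ i) ((τ i)⁻¹ * (g * τ j)) i
  rw [mul_inv_cancel_left, hτi, hφ _ _ hmem, map_sub, ← Module.End.mul_apply, ← map_mul,
    mul_inv_cancel_left, h1] at h2
  simp only [piPerm_apply, Pi.sub_apply, map_sub, ← Module.End.mul_apply, ← map_mul]
  rw [hrj, eq_sub_of_add_eq' h2]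
  abel

end Shapiro

theorem H1Vanish.of_linearEquiv {V W : Type} [AddCommGroup V] [AddCommGroup W]
    {ρ : Representation ℤ G V} {ρ' : Representation ℤ G W}
    (e : V ≃ₗ[ℤ] W) (he : ∀ g v, e (ρ g v) = ρ' g (e v)) (h : H1Vanish ρ') : H1Vanish ρ := by
  intro f hf
  obtain ⟨m, hm⟩ := h (fun g => e (f g)) fun g h => by simp only [hf, map_add, he]
  exact ⟨e.symm m, fun g => e.injective <| by rw [hm, map_sub, he, e.apply_symm_apply]⟩

section Permutation

variable {F Q ι : Type} [AddCommGroup F] [AddCommGroup Q]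

theorem _root_.Module.Basis.coord_apply_perm {ρQ : Representation ℤ G Q}
    (b : Module.Basis ι ℤ Q) {σ : G →* Equiv.Perm ι} (hb : ∀ g i, ρQ g (b i) = b (σ g i))
    (g : G) (i : ι) (q : Q) : b.coord i (ρQ g q) = b.coord ((σ g)⁻¹ i) q := by
  have : b.coord i ∘ₗ ρQ g = b.coord ((σ g)⁻¹ i) :=
    b.ext fun k => by classical simp [hb, Finsupp.single_apply, Equiv.eq_symm_apply]
  exact LinearMap.congr_fun this q

def _root_.Module.Basis.linearMapEquivPi [Fintype ι] (b : Module.Basis ι ℤ Q) :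
    (F →ₗ[ℤ] Q) ≃ₗ[ℤ] (ι → Module.Dual ℤ F) where
  toFun f i := b.coord i ∘ₗ f
  invFun m := ∑ i, (m i).smulRight (b i)
  map_add' _ _ := by ext; simp
  map_smul' _ _ := by ext; simp
  left_inv f := by ext x; simp [b.sum_repr]
  right_inv m := by classical ext i x; simp [Finsupp.single_apply]

theorem h1Vanish_linHom_of_perm [Finite G] [Fintype ι] [Module.IsTorsionFree ℤ F]
    [Module.Finite ℤ F] {ρF : Representation ℤ G F}
    (hF : ∀ H : Subgroup G, Hneg1Vanish (ρF.comp H.subtype)) {ρQ : Representation ℤ G Q}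
    (b : Module.Basis ι ℤ Q) {σ : G →* Equiv.Perm ι} (hb : ∀ g i, ρQ g (b i) = b (σ g i)) :
    H1Vanish (ρF.linHom ρQ) :=
  (h1Vanish_piPerm ρF.dual σ fun _ => (hF _).h1Vanish_dual).of_linearEquiv
    b.linearMapEquivPi fun g f => by
      ext i x
      simp [Module.Basis.linearMapEquivPi, b.coord_apply_perm hb, Module.Dual.transpose_apply]

end Permutation

theorem exists_equivariant_section_of_h1Vanish {F Q X : Type} [AddCommGroup F]
    [Module.Projective ℤ F] [AddCommGroup Q] [AddCommGroup X] {ρF : Representation ℤ G F}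
    {ρQ : Representation ℤ G Q} {ρX : Representation ℤ G X} {α : Q →ₗ[ℤ] X} {β : X →ₗ[ℤ] F}
    (hα : ∀ g q, α (ρQ g q) = ρX g (α q)) (hβ : ∀ g x, β (ρX g x) = ρF g (β x))
    (hαinj : Injective α) (hexact : Exact α β) (hβsurj : Surjective β)
    (hH1 : H1Vanish (ρF.linHom ρQ)) :
    ∃ s : F →ₗ[ℤ] X, β ∘ₗ s = LinearMap.id ∧ ∀ g x, s (ρF g x) = ρX g (s x) := by
  obtain ⟨s₀, hs₀⟩ := β.exists_rightInverse_of_surjective (LinearMap.range_eq_top.2 hβsurj)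
  have hs₀' : ∀ x, β (s₀ x) = x := LinearMap.congr_fun hs₀
  set t : G → F →ₗ[ℤ] X := fun g => ρF.linHom ρX g s₀ - s₀
  have ht : ∀ g x, t g x ∈ LinearMap.range α := fun g x => (hexact _).1 <| by
    simp [t, hβ, hs₀']
  set c : G → F →ₗ[ℤ] Q := fun g =>
    (LinearEquiv.ofInjective α hαinj).symm ∘ₗ (t g).codRestrict _ (ht g)
  have hc : ∀ g x, α (c g x) = t g x := fun g x => by simp [c]
  have hcoc : ∀ g h, c (g * h) = ρF.linHom ρQ g (c h) + c g := fun g h =>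
    LinearMap.ext fun x => hαinj <| by
      simp only [LinearMap.add_apply, map_add, Representation.linHom_apply, LinearMap.comp_apply,
        hα, hc, t, LinearMap.sub_apply, map_sub, mul_inv_rev, map_mul, Module.End.mul_apply]
      abel
  obtain ⟨m, hm⟩ := hH1 c hcoc
  refine ⟨s₀ - α ∘ₗ m, ?_, fun g x => ?_⟩
  · rw [LinearMap.comp_sub, hs₀, ← LinearMap.comp_assoc, hexact.linearMap_comp_eq_zero,
      LinearMap.zero_comp, sub_zero]
  · have key := hc g (ρF g x)
    rw [hm g] at key
    simp only [t, linHom_apply, LinearMap.sub_apply, LinearMap.coe_comp, comp_apply, map_sub, hα,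
      ← Module.End.mul_apply, ← map_mul, inv_mul_cancel, map_one, Module.End.one_apply] at key ⊢
    rw [← sub_eq_zero, ← sub_eq_zero_of_eq key]
    abel

theorem nonempty_equiv_prod_of_flabby_of_perm [Finite G] {F Q X ι : Type}
    [AddCommGroup F] [Module ℤ F] [Module.Free ℤ F] [Module.Finite ℤ F]
    [AddCommGroup Q] [Module ℤ Q] [AddCommGroup X] [Module ℤ X] [Fintype ι]
    {ρF : Representation ℤ G F} {ρQ : Representation ℤ G Q} {ρX : Representation ℤ G X}
    (hF : ∀ H : Subgroup G, Hneg1Vanish (ρF.comp H.subtype))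
    (b : Module.Basis ι ℤ Q) {σ : G →* Equiv.Perm ι} (hb : ∀ g i, ρQ g (b i) = b (σ g i))
    {α : Q →ₗ[ℤ] X} {β : X →ₗ[ℤ] F}
    (hα : ∀ g q, α (ρQ g q) = ρX g (α q)) (hβ : ∀ g x, β (ρX g x) = ρF g (β x))
    (hαinj : Injective α) (hexact : Exact α β) (hβsurj : Surjective β) :
    Nonempty ((ρQ.prod ρF).Equiv ρX) := by
  -- A `ℤ`-module structure is unique; the lemmas above are stated for `AddCommGroup.toIntModule`.
  obtain rfl : ‹Module ℤ F› = AddCommGroup.toIntModule F := Subsingleton.elim _ _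
  obtain rfl : ‹Module ℤ Q› = AddCommGroup.toIntModule Q := Subsingleton.elim _ _
  obtain rfl : ‹Module ℤ X› = AddCommGroup.toIntModule X := Subsingleton.elim _ _
  obtain ⟨s, hs, hseq⟩ := exists_equivariant_section_of_h1Vanish hα hβ hαinj hexact hβsurj
    (h1Vanish_linHom_of_perm hF b hb)
  refine ⟨.mk (hexact.splitSurjectiveEquiv hαinj ⟨s, hs⟩).1.symm fun g =>
    LinearMap.ext fun p => ?_⟩
  show α _ + s _ = ρX g (α _ + s _)
  simp [hα, hseq]

/- Otherwise instance search finds `AddCommGroup.toIntModule` on the quotients below, which is not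
defeq to the quotient of the `ℤ`-module structures carried by the lattices. -/
attribute [local instance 2000] Submodule.Quotient.module

namespace FlabbyResolution

variable [Finite G] {M : GLat G} (R R' : FlabbyResolution M)

def pushoutSubmodule : Submodule ℤ (R.P × R'.P) := LinearMap.range (R.incl.prod (-R'.incl))

theorem pushoutSubmodule_le_comap (g : G) :
    pushoutSubmodule R R' ≤ (pushoutSubmodule R R').comap (R.P.ρ.prod R'.P.ρ g) := by
  rintro _ ⟨m, rfl⟩
  exact ⟨M.ρ g m, by simp [R.equiv_incl g m, R'.equiv_incl g m]⟩

def pushoutRep : Representation ℤ G ((R.P × R'.P) ⧸ pushoutSubmodule R R') :=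
  (R.P.ρ.prod R'.P.ρ).quotient _ (pushoutSubmodule_le_comap R R')

def pushoutInr : R'.P →ₗ[ℤ] (R.P × R'.P) ⧸ pushoutSubmodule R R' :=
  (pushoutSubmodule R R').mkQ ∘ₗ LinearMap.inr ℤ R.P R'.P

def pushoutProj : ((R.P × R'.P) ⧸ pushoutSubmodule R R') →ₗ[ℤ] R.F :=
  (pushoutSubmodule R R').liftQ (R.proj ∘ₗ LinearMap.fst ℤ R.P R'.P) <| by
    rintro _ ⟨m, rfl⟩
    simpa using R.exact.le ⟨m, rfl⟩

theorem pushoutInr_injective : Injective (pushoutInr R R') := by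
  refine (injective_iff_map_eq_zero _).2 fun p hp => ?_
  obtain ⟨m, hm⟩ := (Submodule.Quotient.mk_eq_zero _).1 hp
  obtain ⟨hm₁, hm₂⟩ := Prod.ext_iff.1 hm
  simp only [LinearMap.prod_apply, Function.prod_apply, LinearMap.neg_apply,
    LinearMap.inr_apply] at hm₁ hm₂
  rw [← hm₂, R.inj (hm₁.trans R.incl.map_zero.symm), map_zero, neg_zero]

theorem exact_pushoutInr_pushoutProj : Exact (pushoutInr R R') (pushoutProj R R') := by
  intro x
  induction x using Submodule.Quotient.induction_on with | H p => ?_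
  constructor
  · intro hp
    obtain ⟨m, hm⟩ := R.exact.ge (show p.1 ∈ LinearMap.ker R.proj from hp)
    refine ⟨p.2 + R'.incl m, (Submodule.Quotient.eq _).2 ⟨-m, ?_⟩⟩
    ext <;> simp [hm]
  · rintro ⟨q, hq⟩
    simp [← hq, pushoutInr, pushoutProj]

theorem pushoutProj_surjective : Surjective (pushoutProj R R') := fun f => by
  obtain ⟨p, hp⟩ := R.surj f
  exact ⟨Submodule.Quotient.mk (p, 0), hp⟩

theorem pushoutInr_equivariant (g : G) (q : R'.P) :
    pushoutInr R R' (R'.P.ρ g q) = pushoutRep R R' g (pushoutInr R R' q) := by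
  simp [pushoutInr, pushoutRep]

theorem pushoutProj_equivariant (g : G) (x : (R.P × R'.P) ⧸ pushoutSubmodule R R') :
    pushoutProj R R' (pushoutRep R R' g x) = R.F.ρ g (pushoutProj R R' x) := by
  induction x using Submodule.Quotient.induction_on with | H p => ?_
  exact R.equiv_proj g p.1

theorem nonempty_equiv_pushoutRep : Nonempty ((R'.P.ρ.prod R.F.ρ).Equiv (pushoutRep R R')) := by
  obtain ⟨ι, _, b, σ, hb⟩ := R'.permP
  exact nonempty_equiv_prod_of_flabby_of_perm R.flabbyF b hb (pushoutInr_equivariant R R')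
    (pushoutProj_equivariant R R') (pushoutInr_injective R R') (exact_pushoutInr_pushoutProj R R')
    (pushoutProj_surjective R R')

theorem nonempty_pushoutRep_equiv_swap :
    Nonempty ((pushoutRep R R').Equiv (pushoutRep R' R)) := by
  -- `(p, p') ↦ (-p', -p)` carries `(i m, -i' m)` to `(i' m, -i m)`.
  let e : (R.P × R'.P) ≃ₗ[ℤ] (R'.P × R.P) := (LinearEquiv.prodComm ℤ _ _).trans (.neg ℤ)
  have he : (pushoutSubmodule R R').map (e : R.P × R'.P →ₗ[ℤ] R'.P × R.P) =
      pushoutSubmodule R' R := by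
    rw [pushoutSubmodule, ← LinearMap.range_comp]
    congr 1
    ext m <;> simp [e]
  refine ⟨.mk (Submodule.Quotient.equiv _ _ e he) fun g => ?_⟩
  ext <;> simp [e, pushoutRep]

end FlabbyResolution

def prodCommEquiv {V W : Type} [AddCommGroup V] [Module ℤ V] [AddCommGroup W] [Module ℤ W]
    (ρ : Representation ℤ G V) (ρ' : Representation ℤ G W) : (ρ.prod ρ').Equiv (ρ'.prod ρ) :=
  .mk (LinearEquiv.prodComm ℤ V W) fun g => by ext <;> simp

theorem GLat.iso_of_equiv {A B : GLat G} (φ : A.ρ.Equiv B.ρ) : A.Iso B :=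
  ⟨φ.toLinearEquiv, fun g m => LinearMap.congr_fun (φ.isIntertwining' g) m⟩

/-- Given two flabby resolutions `0 → M → P → F → 0` and
`0 → M → P' → F' → 0` of the same `G`-lattice `M`, we have `F ⊕ P' ≅ F' ⊕ P`;
in particular the similarity class of `F` is independent of the resolution. -/
theorem flabby_class_well_defined (G : Type) [Group G] [Finite G] (M : GLat G)
    (R R' : FlabbyResolution M) :
    (R.F.sum R'.P).Iso (R'.F.sum R.P) := by
  obtain ⟨e₁⟩ := R.nonempty_equiv_pushoutRep R'
  obtain ⟨e₂⟩ := R'.nonempty_equiv_pushoutRep R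
  obtain ⟨e⟩ := R.nonempty_pushoutRep_equiv_swap R'
  exact GLat.iso_of_equiv <|
    (prodCommEquiv _ _).trans <| e₁.trans <| e.trans <| e₂.symm.trans (prodCommEquiv _ _)
end Paper
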